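/- arXiv:2402.06207 — 9 statements merged into one kernel-verified Lean document; each statement's English description precedes it below -/
import Mathlib

section
/- Let A be a δ-ring (a Z_(p)-algebra with a map δ: A → A satisfying δ(0)=δ(1)=0, δ(a+b)=δ(a)+δ(b)+(a^p+b^p-(a+b)^p)/p, and δ(ab)=a^p δ(b)+b^p δ(a)+p δ(a)δ(b)). If a ∈ A satisfies p^n a = 0 for some integer n > 0, then p^{n+1} δ(a) = 0. -/
open scoped BigOperators

/-- A δ-structure on a commutative `ℤ_(p)`-algebra `A`: a map `δ : A → A` with
`δ(0) = δ(1) = 0`, `δ(a+b) = δ a + δ b + (a^p + b^p - (a+b)^p)/p` (expressed via binomial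
coefficients divided by the prime `p`), and
`δ(ab) = a^p δ b + b^p δ a + p δ a δ b`.  The field `isUnit_of_not_dvd` expresses that `A`
is a `ℤ_(p)`-algebra. -/
structure DeltaStructure (A : Type) [CommRing A] (p : ℕ) : Type where
  δ : A → A
  delta_zero : δ 0 = 0
  delta_one : δ 1 = 0
  delta_add : ∀ a b : A, δ (a + b) = δ a + δ b -
      ∑ i ∈ Finset.Ioo 0 p, (((p.choose i) / p : ℕ) : A) * a ^ i * b ^ (p - i)
  delta_mul : ∀ a b : A, δ (a * b) =
      a ^ p * δ b + b ^ p * δ a + (p : A) * δ a * δ b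
  isUnit_of_not_dvd : ∀ n : ℤ, ¬ ((p : ℤ) ∣ n) → IsUnit ((n : A))

/-- The Frobenius lift `φ(a) = a^p + p·δ(a)` associated to a δ-structure. -/
def DeltaStructure.phi {A : Type} [CommRing A] {p : ℕ} (D : DeltaStructure A p) (a : A) : A :=
  a ^ p + (p : A) * D.δ a

/-- An `A`-module `M` is derived `f`-complete iff the map `(xₙ) ↦ (xₙ - f·xₙ₊₁)` on `M^ℕ`
is bijective (equivalently, `Hom(A[1/f], M) = Ext¹(A[1/f], M) = 0`). -/
def DerivedFComplete {A : Type} [CommRing A] (f : A) (M : Type) [AddCommGroup M]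
    [Module A M] : Prop :=
  Function.Bijective (fun x : ℕ → M => fun n => x n - f • x (n + 1))

lemma key (p : ℕ) [Fact (Nat.Prime p)] {A : Type} [CommRing A] (a b : A) :
    (p : A) * ∑ i ∈ Finset.Ioo 0 p, (((p.choose i) / p : ℕ) : A) * a ^ i * b ^ (p - i)
      = (a + b) ^ p - a ^ p - b ^ p := by
  have hp := (Fact.out : Nat.Prime p)
  rw [Finset.mul_sum]
  have h1 : ∀ i ∈ Finset.Ioo 0 p,
      (p : A) * ((((p.choose i) / p : ℕ) : A) * a ^ i * b ^ (p - i))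
        = a ^ i * b ^ (p - i) * (p.choose i : A) := by
    intro i hi
    simp only [Finset.mem_Ioo] at hi
    have hd : p ∣ p.choose i := hp.dvd_choose_self (by omega) hi.2
    have : (p : ℕ) * (p.choose i / p) = p.choose i := Nat.mul_div_cancel' hd
    calc (p : A) * ((((p.choose i) / p : ℕ) : A) * a ^ i * b ^ (p - i))
        = ((p * (p.choose i / p) : ℕ) : A) * a ^ i * b ^ (p - i) := by push_cast; ring
      _ = a ^ i * b ^ (p - i) * (p.choose i : A) := by rw [this]; ring
  rw [Finset.sum_congr rfl h1]
  have hab := add_pow a b p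
  have hrange : Finset.range (p + 1) = insert 0 (insert p (Finset.Ioo 0 p)) := by
    ext i
    simp [Finset.mem_Ioo, Finset.mem_range]
    omega
  have hppos := hp.pos
  rw [hrange, Finset.sum_insert (by simp [Finset.mem_Ioo]; omega),
    Finset.sum_insert (by simp [Finset.mem_Ioo])] at hab
  simp only [pow_zero, Nat.sub_zero, Nat.choose_zero_right, Nat.choose_self, Nat.sub_self,
    Nat.cast_one, one_mul, mul_one] at hab
  linear_combination -hab

lemma phi_add (p : ℕ) [Fact (Nat.Prime p)] {A : Type} [CommRing A] (D : DeltaStructure A p)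
    (a b : A) : D.phi (a + b) = D.phi a + D.phi b := by
  simp only [DeltaStructure.phi, D.delta_add]
  linear_combination -key p a b

lemma phi_mul (p : ℕ) [Fact (Nat.Prime p)] {A : Type} [CommRing A] (D : DeltaStructure A p)
    (a b : A) : D.phi (a * b) = D.phi a * D.phi b := by
  simp only [DeltaStructure.phi, D.delta_mul]
  ring

lemma phi_natCast (p : ℕ) [Fact (Nat.Prime p)] {A : Type} [CommRing A] (D : DeltaStructure A p)
    (m : ℕ) : D.phi (m : A) = (m : A) := by
  induction m with
  | zero => simp [DeltaStructure.phi, D.delta_zero, (Fact.out : Nat.Prime p).ne_zero]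
  | succ k ih =>
    push_cast
    have h1 : D.phi (1 : A) = 1 := by simp [DeltaStructure.phi, D.delta_one]
    rw [phi_add p D, ih, h1]

theorem statement0 (p : ℕ) [Fact (Nat.Prime p)] {A : Type} [CommRing A]
    (D : DeltaStructure A p) (a : A) (n : ℕ) (hn : 0 < n)
    (h : (p : A) ^ n * a = 0) :
    (p : A) ^ (n + 1) * D.δ a = 0 := by
  have hp := (Fact.out : Nat.Prime p)
  have hpow : ∀ m : ℕ, D.phi ((p : A) ^ m) = (p : A) ^ m := by
    intro m
    induction m with
    | zero => simpa using phi_natCast p D 1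
    | succ k ih =>
      rw [pow_succ, phi_mul p D, ih, phi_natCast p D p]
  have h0 : D.phi ((p : A) ^ n * a) = 0 := by
    rw [h, show (0 : A) = ((0 : ℕ) : A) by simp, phi_natCast p D]
  rw [phi_mul p D, hpow n, DeltaStructure.phi] at h0
  have hap : (p : A) ^ n * a ^ p = 0 := by
    have : a ^ p = a * a ^ (p - 1) := by
      conv_lhs => rw [show p = 1 + (p - 1) by have := hp.pos; omega]
      rw [pow_add, pow_one]
    rw [this, ← mul_assoc, h, zero_mul]
  calc (p : A) ^ (n + 1) * D.δ a
      = (p : A) ^ n * (a ^ p + (p : A) * D.δ a) - (p : A) ^ n * a ^ p := by ring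
    _ = 0 := by rw [h0, hap]; ring
end

section
/- Let A be a δ-ring (a commutative Z_(p)-algebra with a δ-structure). Then every p-power-torsion element of A is nilpotent; that is, the submodule A[p^∞] of p^∞-torsion elements is contained in the nilradical of A. -/
open scoped BigOperators

theorem sum_choose_div (p : ℕ) (hp : p.Prime) (m : ℤ) :
    (p : ℤ) * ∑ i ∈ Finset.Ioo 0 p, ((p.choose i / p : ℕ) : ℤ) * m ^ i
      = (m + 1) ^ p - m ^ p - 1 := by
  have hp1 : 1 ≤ p := hp.one_lt.le
  have hIoo : Finset.Ioo 0 p = (Finset.range p).erase 0 := by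
    ext i; simp; omega
  rw [Finset.mul_sum]
  have key : ∀ i ∈ Finset.Ioo 0 p,
      (p : ℤ) * (((p.choose i / p : ℕ) : ℤ) * m ^ i) = (p.choose i : ℤ) * m ^ i := by
    intro i hi
    simp only [Finset.mem_Ioo] at hi
    have hdvd : p ∣ p.choose i := hp.dvd_choose_self (by omega) hi.2
    rw [← mul_assoc]
    congr 1
    rw [← Nat.cast_mul, Nat.mul_div_cancel' hdvd]
  rw [Finset.sum_congr rfl key]
  have hadd := add_pow m 1 p
  simp only [one_pow, mul_one] at hadd
  rw [hadd, Finset.sum_range_succ, hIoo, Finset.sum_erase_eq_sub (by simp; omega)]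
  simp [Nat.choose_self, mul_comm]

theorem delta_natmul {A : Type} [CommRing A] {p : ℕ} (hp : p.Prime)
    (D : DeltaStructure A p) (m : ℕ) :
    ∃ t : ℤ, (p : ℤ) * t = (m : ℤ) - (m : ℤ) ^ p ∧
      ∀ x : A, D.δ ((m : A) * x) = (m : A) * D.δ x + (t : A) * x ^ p := by
  induction m with
  | zero =>
    exact ⟨0, by simp [hp.ne_zero], fun x => by simp [D.delta_zero]⟩
  | succ m ih =>
    obtain ⟨t, ht, hδ⟩ := ih
    refine ⟨t - ∑ i ∈ Finset.Ioo 0 p, ((p.choose i / p : ℕ) : ℤ) * (m : ℤ) ^ i, ?_, ?_⟩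
    · rw [mul_sub, ht, sum_choose_div p hp (m : ℤ)]
      push_cast
      ring
    · intro x
      have hsplit : ((m + 1 : ℕ) : A) * x = (m : A) * x + x := by push_cast; ring
      rw [hsplit, D.delta_add, hδ]
      have hterm : ∀ i ∈ Finset.Ioo 0 p,
          (((p.choose i / p : ℕ) : A)) * ((m : A) * x) ^ i * x ^ (p - i)
            = (((p.choose i / p : ℕ) : A)) * (m : A) ^ i * x ^ p := by
        intro i hi
        simp only [Finset.mem_Ioo] at hi
        rw [mul_pow, mul_assoc, mul_assoc, mul_assoc, ← pow_add,
          Nat.add_sub_cancel' hi.2.le]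
      rw [Finset.sum_congr rfl hterm]
      have hsum : (∑ i ∈ Finset.Ioo 0 p,
          (((p.choose i / p : ℕ) : A)) * (m : A) ^ i * x ^ p)
          = ((∑ i ∈ Finset.Ioo 0 p, ((p.choose i / p : ℕ) : ℤ) * (m : ℤ) ^ i : ℤ) : A)
            * x ^ p := by
        rw [Int.cast_sum, Finset.sum_mul]
        refine Finset.sum_congr rfl fun i hi => ?_
        rw [Int.cast_mul, Int.cast_pow, Int.cast_natCast, Int.cast_natCast]
      rw [hsum]
      push_cast
      ring

theorem statement1 (p : ℕ) [Fact (Nat.Prime p)] {A : Type} [CommRing A]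
    (D : DeltaStructure A p) (a : A)
    (h : ∃ n : ℕ, 1 ≤ n ∧ (p : A) ^ n * a = 0) :
    IsNilpotent a := by
  have hp : p.Prime := Fact.out
  obtain ⟨n, -, hn⟩ := h
  clear * - hp hn D
  induction n generalizing a with
  | zero => simp at hn; exact hn ▸ IsNilpotent.zero
  | succ n ih =>
    obtain ⟨t, ht, hδ⟩ := delta_natmul hp D (p ^ (n + 1))
    have hcast : ((p ^ (n + 1) : ℕ) : A) = (p : A) ^ (n + 1) := by push_cast; rfl
    have h0 : (p : A) ^ (n + 1) * D.δ a + (t : A) * a ^ p = 0 := by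
      have := hδ a
      rw [hcast, hn, D.delta_zero] at this
      linear_combination -this
    set k := (n + 1) * (p - 1) with hk
    have hk1 : 1 ≤ k := Nat.mul_pos (Nat.succ_pos n) (by have := hp.two_le; omega)
    have hpexp : (n + 1) + k = (n + 1) * p := by
      obtain ⟨q, rfl⟩ : ∃ q, p = q + 2 := ⟨p - 2, by have := hp.two_le; omega⟩
      have hq : q + 2 - 1 = q + 1 := rfl
      rw [hk, hq]
      ring
    have htval : t = (p : ℤ) ^ n * (1 - (p : ℤ) ^ k) := by
      have hpne : (p : ℤ) ≠ 0 := by exact_mod_cast hp.pos.ne'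
      refine mul_left_cancel₀ hpne ?_
      rw [ht]
      have hexp : ((p ^ (n + 1) : ℕ) : ℤ) ^ p = (p : ℤ) ^ (n + 1) * (p : ℤ) ^ k := by
        push_cast
        rw [← pow_mul, ← pow_add, hpexp]
      rw [hexp]
      push_cast
      ring
    have h1 : (t : A) * a ^ (p + 1) = 0 := by
      have h2 := congrArg (· * a) h0
      simp only [add_mul, zero_mul] at h2
      calc (t : A) * a ^ (p + 1) = (p : A) ^ (n+1) * D.δ a * a + (t : A) * a ^ p * a := by
            rw [mul_assoc, mul_comm (D.δ a) a, ← mul_assoc, hn]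
            ring
        _ = 0 := h2
    rw [htval] at h1
    push_cast at h1
    have hu : IsUnit (((1 - (p : ℤ) ^ k) : ℤ) : A) := by
      apply D.isUnit_of_not_dvd
      intro hdvd
      have hone : (p : ℤ) ∣ 1 := by
        have := dvd_add hdvd (dvd_pow_self (p : ℤ) (by omega : k ≠ 0))
        simpa using this
      have hle := Int.le_of_dvd one_pos hone
      have h2 : (2 : ℤ) ≤ (p : ℤ) := by exact_mod_cast hp.two_le
      omega
    have h2 : (p : A) ^ n * a ^ (p + 1) = 0 := by
      obtain ⟨u, hu⟩ := hu
      have h3 : ((1 - (p:ℤ)^k : ℤ) : A) * ((p : A) ^ n * a ^ (p + 1)) = 0 := by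
        push_cast
        linear_combination h1
      rw [← hu] at h3
      exact (Units.mul_right_eq_zero u).mp h3
    obtain ⟨m, hm⟩ := ih _ h2
    exact ⟨(p + 1) * m, by rw [pow_mul]; exact hm⟩
end

section
/- Let A be a δ-ring which is p-adically separated (i.e., the intersection of the ideals p^n A over all n ≥ 0 is zero). If the ideal pA is a prime ideal of A, then A is p-torsion-free. -/
open scoped BigOperators

/-!
If `p ^ (n + 1) * b = 0`, applying `δ` and using `δ (p ^ (n + 1)) = p ^ n * u` with
`u = 1 - (p ^ (n + 1)) ^ (p - 1)` a unit gives `p ^ n * (u * b ^ p + p * δ b) = 0`. By induction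
on `n`, `b ^ p` and hence, `pA` being prime, `b` lies in `pA`. Thus a `p`-torsion element is
`p ^ n * b` with `b` again `p`-power torsion, so it is divisible by every power of `p` and
vanishes by separatedness.
-/

open Finset in
theorem Nat.Prime.mul_sum_choose_div {R : Type*} [CommRing R] {p : ℕ} (hp : p.Prime) (x y : R) :
    (p : R) * ∑ i ∈ Ioo 0 p, (((p.choose i) / p : ℕ) : R) * x ^ i * y ^ (p - i) =
      (x + y) ^ p - x ^ p - y ^ p := by
  have hterm : ∀ i ∈ Ioo 0 p, (p : R) * ((((p.choose i) / p : ℕ) : R) * x ^ i * y ^ (p - i)) =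
      x ^ i * y ^ (p - i) * (p.choose i : R) := by
    intro i hi
    rw [mem_Ioo] at hi
    rw [← mul_assoc, ← mul_assoc, ← Nat.cast_mul,
      Nat.mul_div_cancel' (hp.dvd_choose_self hi.1.ne' hi.2)]
    ring
  rw [mul_sum, sum_congr rfl hterm, add_pow, range_eq_Ico, Ico_add_one_right_eq_Icc,
    ← Ico_insert_right (Nat.zero_le p), ← Ioo_insert_left hp.pos,
    sum_insert (by simp [hp.ne_zero]), sum_insert (by simp)]
  simp

theorem dvd_of_mul_eq_zero_of_forall_pow_mul_eq_zero {R : Type*} [CommRing R] {x a : R}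
    (h : ∀ n b, x ^ n * b = 0 → x ∣ b) (ha : x * a = 0) (n : ℕ) : x ^ n ∣ a := by
  induction n with
  | zero => simp
  | succ n ih =>
    obtain ⟨b, rfl⟩ := ih
    obtain ⟨c, rfl⟩ := h (n + 1) b (by rw [pow_succ', mul_assoc, ha])
    exact ⟨c, by ring⟩

/-- `δ` of the unique δ-structure on `ℤ`. -/
def intDelta (p : ℕ) (k : ℤ) : ℤ := (k - k ^ p) / p

section intDelta

variable {p : ℕ} [hp : Fact p.Prime]

theorem prime_mul_intDelta (k : ℤ) : (p : ℤ) * intDelta p k = k - k ^ p := by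
  refine Int.mul_ediv_cancel' ((ZMod.intCast_zmod_eq_zero_iff_dvd _ p).1 ?_)
  push_cast
  rw [ZMod.pow_card, sub_self]

theorem intDelta_add_one (k : ℤ) :
    intDelta p (k + 1) = intDelta p k -
      ∑ i ∈ Finset.Ioo 0 p, (((p.choose i) / p : ℕ) : ℤ) * k ^ i * 1 ^ (p - i) := by
  apply mul_left_cancel₀ (Int.natCast_ne_zero.2 hp.out.ne_zero)
  rw [mul_sub, prime_mul_intDelta, prime_mul_intDelta, hp.out.mul_sum_choose_div]
  ring

theorem intDelta_prime_pow (n : ℕ) :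
    intDelta p ((p : ℤ) ^ (n + 1)) = (p : ℤ) ^ n * (1 - ((p : ℤ) ^ (n + 1)) ^ (p - 1)) := by
  apply mul_left_cancel₀ (Int.natCast_ne_zero.2 hp.out.ne_zero)
  rw [prime_mul_intDelta, ← mul_pow_sub_one hp.out.ne_zero ((p : ℤ) ^ (n + 1))]
  ring

end intDelta

namespace DeltaStructure

variable {A : Type} [CommRing A] {p : ℕ} [hp : Fact p.Prime]

theorem delta_natCast (D : DeltaStructure A p) (k : ℕ) : D.δ (k : A) = intDelta p k := by
  induction k with
  | zero => simp [intDelta, zero_pow hp.out.ne_zero, D.delta_zero]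
  | succ k ih =>
    rw [Nat.cast_succ, D.delta_add, D.delta_one, ih, Nat.cast_succ, intDelta_add_one]
    simp only [Int.cast_sub, Int.cast_sum, Int.cast_mul, Int.cast_pow, Int.cast_natCast,
      Int.cast_one, add_zero]

theorem delta_prime_pow (D : DeltaStructure A p) (n : ℕ) :
    D.δ ((p : A) ^ (n + 1)) = (p : A) ^ n * (1 - ((p : A) ^ (n + 1)) ^ (p - 1)) := by
  rw [← Nat.cast_pow, delta_natCast, Nat.cast_pow, intDelta_prime_pow]
  push_cast
  rfl

theorem isUnit_one_sub_intCast (D : DeltaStructure A p) {m : ℤ} (hm : (p : ℤ) ∣ m) :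
    IsUnit (1 - (m : A)) := by
  rw [← Int.cast_one, ← Int.cast_sub]
  refine D.isUnit_of_not_dvd _ fun h => hp.out.not_dvd_one ?_
  exact Int.natCast_dvd_natCast.1 (by simpa using dvd_add h hm)

theorem prime_pow_mul_delta_eq_zero (D : DeltaStructure A p) {n : ℕ} {b : A}
    (hb : (p : A) ^ (n + 1) * b = 0) :
    (p : A) ^ n * ((1 - ((p : A) ^ (n + 1)) ^ (p - 1)) * b ^ p + p * D.δ b) = 0 := by
  have h := congrArg D.δ hb
  rw [D.delta_mul, D.delta_zero, delta_prime_pow,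
    ← mul_pow_sub_one hp.out.ne_zero ((p : A) ^ (n + 1))] at h
  linear_combination h

theorem prime_dvd_of_prime_pow_mul_eq_zero (D : DeltaStructure A p)
    (hprime : (Ideal.span {(p : A)}).IsPrime)
    {n : ℕ} {b : A} (hb : (p : A) ^ n * b = 0) : (p : A) ∣ b := by
  induction n generalizing b with
  | zero => simp_all
  | succ n ih =>
    have hu : IsUnit (1 - ((p : A) ^ (n + 1)) ^ (p - 1)) := by
      simpa using D.isUnit_one_sub_intCast (m := ((p : ℤ) ^ (n + 1)) ^ (p - 1))
        (dvd_pow (dvd_pow_self _ n.succ_ne_zero) (by have := hp.out.two_le; omega))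
    have key := Ideal.mem_span_singleton.2 (ih (D.prime_pow_mul_delta_eq_zero hb))
    rw [Ideal.add_mem_iff_left _ (Ideal.mul_mem_right _ _ (Ideal.mem_span_singleton_self _)),
      Ideal.unit_mul_mem_iff_mem _ hu] at key
    exact Ideal.mem_span_singleton.1 (hprime.mem_of_pow_mem p key)

end DeltaStructure

theorem statement2 (p : ℕ) [Fact (Nat.Prime p)] {A : Type} [CommRing A]
    (D : DeltaStructure A p)
    (hsep : ∀ a : A, (∀ n : ℕ, a ∈ Ideal.span {(p : A) ^ n}) → a = 0)
    (hprime : (Ideal.span {(p : A)}).IsPrime) :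
    ∀ a : A, (p : A) * a = 0 → a = 0 := fun a ha =>
  hsep a fun n => Ideal.mem_span_singleton.2 <| dvd_of_mul_eq_zero_of_forall_pow_mul_eq_zero
    (fun _ _ hb => D.prime_dvd_of_prime_pow_mul_eq_zero hprime hb) ha n
end

section
/- Let A be a commutative ring and let x, y be a regular sequence on A (x is a non-zero-divisor on A and y is a non-zero-divisor on A/xA). If A is derived x-complete, then y, x is also a regular sequence on A. -/
open scoped BigOperators

/-! If `y • c = 0`, then `c ∈ x • A` since `y` is regular mod `x`, and `c = x • d` with
`y • d = 0` since `x` is regular. So the `y`-torsion is infinitely `x`-divisible within itself,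
and derived `x`-completeness forces it to vanish. Once `y` is regular, regularity of `y` mod `x`
and of `x` mod `y` both say `x • A ⊓ y • A ≤ x • y • A`. -/

open scoped Pointwise
open Submodule

namespace DerivedFComplete

variable {A M : Type} [CommRing A] [AddCommGroup M] [Module A M] {f : A}

theorem eq_zero_of_eq_smul_succ (hc : DerivedFComplete f M) {s : ℕ → M}
    (hs : ∀ n, s n = f • s (n + 1)) : s = 0 :=
  hc.injective <| funext fun n => by simp [← hs n]

theorem eq_bot_of_le_smul (hc : DerivedFComplete f M) {N : Submodule A M} (hN : N ≤ f • N) :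
    N = ⊥ := by
  have hdiv : ∀ c : N, ∃ d : N, (c : M) = f • (d : M) := fun c => by
    obtain ⟨d, hd, hfd⟩ := (mem_smul_pointwise_iff_exists _ _ _).mp (hN c.2)
    exact ⟨⟨d, hd⟩, hfd.symm⟩
  choose g hg using hdiv
  refine (Submodule.eq_bot_iff _).mpr fun c hc' => ?_
  have hs := hc.eq_zero_of_eq_smul_succ (s := fun n => (g^[n] ⟨c, hc'⟩ : M)) fun n => by
    simp only [Function.iterate_succ_apply']
    exact hg _
  exact congrFun hs 0

end DerivedFComplete

namespace RingTheory.Sequence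

variable {R M : Type*} [CommRing R] [AddCommGroup M] [Module R M] {x y : R}

theorem IsWeaklyRegular.torsionBy_le_smul_torsionBy (h : IsWeaklyRegular M [x, y]) :
    torsionBy R M y ≤ x • torsionBy R M y := by
  rw [isWeaklyRegular_cons_iff, isWeaklyRegular_singleton_iff] at h
  obtain ⟨hx, hy⟩ := h
  intro c hc
  have hyc : y • c = 0 := (mem_torsionBy_iff _ _).mp hc
  obtain ⟨d, -, rfl⟩ := (mem_smul_pointwise_iff_exists _ _ _).mp <|
    mem_of_isSMulRegular_quotient_of_smul_mem hy (hyc ▸ zero_mem _ : y • c ∈ x • ⊤)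
  have hyd : y • d = 0 := hx.right_eq_zero_of_smul (by rwa [smul_comm])
  exact smul_mem_pointwise_smul _ _ _ ((mem_torsionBy_iff _ _).mpr hyd)

theorem IsWeaklyRegular.swap_of_isSMulRegular (h : IsWeaklyRegular M [x, y])
    (hy : IsSMulRegular M y) : IsWeaklyRegular M [y, x] := by
  rw [isWeaklyRegular_cons_iff, isWeaklyRegular_singleton_iff] at h ⊢
  obtain ⟨hx, hyx⟩ := h
  rwa [hx.isSMulRegular_on_quot_iff_smul_top_inf_eq_smul, inf_comm, smul_comm,
    ← hy.isSMulRegular_on_quot_iff_smul_top_inf_eq_smul, and_iff_left hyx]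

end RingTheory.Sequence

theorem statement3 {A : Type} [CommRing A] (x y : A)
    (hreg : RingTheory.Sequence.IsWeaklyRegular A [x, y])
    (hc : DerivedFComplete x A) :
    RingTheory.Sequence.IsWeaklyRegular A [y, x] :=
  hreg.swap_of_isSMulRegular <| (isSMulRegular_iff_torsionBy_eq_bot A y).mpr <|
    hc.eq_bot_of_le_smul hreg.torsionBy_le_smul_torsionBy
end

section
/- Let A be a commutative ring, f_1, …, f_r elements of A, and e_1, …, e_r positive integers. Then f_1, …, f_r is a regular sequence on A if and only if f_1^{e_1}, …, f_r^{e_r} is a regular sequence on A. -/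
open scoped BigOperators

/-!
Replace one element of the sequence by its power at a time. If `x` is regular on a module `N`,
then `y` is regular on `N ⧸ xN` iff it is regular on `N ⧸ xᵉN`: from `y m = xᵉ a` induction on
`e` gives `m = xᵉ⁻¹ u`, and cancelling `xᵉ⁻¹` leaves `y u = x a`; conversely multiply
`y m = x a` by `xᵉ⁻¹`. Moreover `x` stays regular on `N ⧸ yN` when `y` is regular on `N ⧸ xN`, and
`(N ⧸ xN) ⧸ y = (N ⧸ yN) ⧸ x`, so regularity of `x, y, …` on `N` is regularity of `x, y`
together with that of `x, …` on `N ⧸ yN`. This carries the power of `x` past every later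
element of the sequence.
-/

open Pointwise Submodule

variable {R M : Type*} [CommRing R] [AddCommGroup M] [Module R M]

lemma isSMulRegular_quotSMulTop_iff {x y : R} :
    IsSMulRegular (QuotSMulTop x M) y ↔ ∀ m a : M, y • m = x • a → ∃ b, m = x • b := by
  simp only [isSMulRegular_quotient_iff_mem_of_smul_mem, mem_smul_pointwise_iff_exists,
    mem_top, true_and, forall_exists_index, @eq_comm _ (x • _)]

lemma IsSMulRegular.quotSMulTop_swap {x y : R} (hx : IsSMulRegular M x)
    (hy : IsSMulRegular (QuotSMulTop x M) y) : IsSMulRegular (QuotSMulTop y M) x := by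
  rw [isSMulRegular_quotSMulTop_iff] at hy ⊢
  intro m n hmn
  obtain ⟨n', rfl⟩ := hy n m hmn.symm
  exact ⟨n', hx <| show x • m = x • y • n' by rw [hmn, smul_comm]⟩

lemma IsSMulRegular.quotSMulTop_pow {x y : R} (hx : IsSMulRegular M x)
    (hy : IsSMulRegular (QuotSMulTop x M) y) (e : ℕ) :
    IsSMulRegular (QuotSMulTop (x ^ e) M) y := by
  rw [isSMulRegular_quotSMulTop_iff] at hy ⊢
  induction e with
  | zero => exact fun m _ _ => ⟨m, by rw [pow_zero, one_smul]⟩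
  | succ e ih =>
    intro m a hma
    obtain ⟨u, rfl⟩ := ih m (x • a) (by rw [hma, pow_succ, mul_smul])
    obtain ⟨w, rfl⟩ := hy u a <| hx.pow e <| show x ^ e • y • u = x ^ e • x • a by
      rw [smul_comm, hma, pow_succ, mul_smul]
    exact ⟨w, by rw [pow_succ, mul_smul]⟩

lemma IsSMulRegular.of_quotSMulTop_pow {x y : R} (hx : IsSMulRegular M x) {e : ℕ} (he : 0 < e)
    (hy : IsSMulRegular (QuotSMulTop (x ^ e) M) y) : IsSMulRegular (QuotSMulTop x M) y := by
  obtain ⟨k, rfl⟩ := Nat.exists_eq_add_one_of_ne_zero he.ne'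
  rw [isSMulRegular_quotSMulTop_iff] at hy ⊢
  intro m a hma
  obtain ⟨b, hb⟩ := hy (x ^ k • m) a <| by rw [smul_comm, hma, pow_succ, mul_smul]
  exact ⟨b, hx.pow k <| show x ^ k • m = x ^ k • x • b by rw [hb, pow_succ, mul_smul]⟩

lemma IsSMulRegular.quotSMulTop_pow_iff {x : R} (hx : IsSMulRegular M x)
    {e : ℕ} (he : 0 < e) (y : R) :
    IsSMulRegular (QuotSMulTop (x ^ e) M) y ↔ IsSMulRegular (QuotSMulTop x M) y :=
  ⟨hx.of_quotSMulTop_pow he, fun hy => hx.quotSMulTop_pow hy e⟩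

namespace QuotSMulTop

def equivQuotSup (x y : R) :
    QuotSMulTop y (QuotSMulTop x M) ≃ₗ[R] M ⧸ (x • ⊤ ⊔ y • ⊤ : Submodule R M) :=
  quotEquivOfEq _ _ (by rw [map_pointwise_smul, Submodule.map_top, range_mkQ]) ≪≫ₗ
    quotientQuotientEquivQuotientSup _ _

protected def comm (x y : R) :
    QuotSMulTop x (QuotSMulTop y M) ≃ₗ[R] QuotSMulTop y (QuotSMulTop x M) :=
  equivQuotSup y x ≪≫ₗ quotEquivOfEq _ _ (sup_comm _ _) ≪≫ₗ
    (equivQuotSup x y).symm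

end QuotSMulTop

namespace RingTheory.Sequence

lemma isWeaklyRegular_cons_cons_iff (x y : R) (rs : List R) :
    IsWeaklyRegular M (x :: y :: rs) ↔ IsSMulRegular M x ∧
      IsSMulRegular (QuotSMulTop x M) y ∧ IsWeaklyRegular (QuotSMulTop y M) (x :: rs) := by
  simp only [isWeaklyRegular_cons_iff, ← (QuotSMulTop.comm x y).isWeaklyRegular_congr]
  exact and_congr_right fun hx => and_congr_right fun hy =>
    (and_iff_right (hx.quotSMulTop_swap hy)).symm

lemma isWeaklyRegular_cons_pow_iff (x : R) {e : ℕ} (he : 0 < e) (rs : List R) :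
    IsWeaklyRegular M (x ^ e :: rs) ↔ IsWeaklyRegular M (x :: rs) := by
  induction rs generalizing M with
  | nil => simp only [isWeaklyRegular_singleton_iff, IsSMulRegular.pow_iff he]
  | cons y rs ih =>
    rw [isWeaklyRegular_cons_cons_iff, isWeaklyRegular_cons_cons_iff, IsSMulRegular.pow_iff he]
    exact and_congr_right fun hx => and_congr (hx.quotSMulTop_pow_iff he y) ih

lemma isWeaklyRegular_ofFn_pow_iff {r : ℕ} (f : Fin r → R) (e : Fin r → ℕ) (he : ∀ i, 0 < e i) :
    IsWeaklyRegular M (List.ofFn fun i => f i ^ e i) ↔ IsWeaklyRegular M (List.ofFn f) := by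
  induction r generalizing M with
  | zero => simp only [List.ofFn_zero]
  | succ r ih =>
    rw [List.ofFn_succ, List.ofFn_succ, isWeaklyRegular_cons_pow_iff _ (he 0),
      isWeaklyRegular_cons_iff, isWeaklyRegular_cons_iff, ih _ _ fun i => he i.succ]

end RingTheory.Sequence

theorem statement4 {A : Type} [CommRing A] (r : ℕ) (f : Fin r → A) (e : Fin r → ℕ)
    (he : ∀ i, 0 < e i) :
    RingTheory.Sequence.IsWeaklyRegular A (List.ofFn f) ↔
      RingTheory.Sequence.IsWeaklyRegular A (List.ofFn fun i => f i ^ e i) :=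
  (RingTheory.Sequence.isWeaklyRegular_ofFn_pow_iff f e he).symm
end

section
/- Let A be a p-Zariskian ring (p lies in the Jacobson radical of A) equipped with a δ-structure. Then δ maps the square of the Jacobson radical into the Jacobson radical: δ(Jac(A)^2) ⊆ Jac(A). -/
open scoped BigOperators

theorem statement5 (p : ℕ) [Fact (Nat.Prime p)] {A : Type} [CommRing A]
    (D : DeltaStructure A p)
    (hp : (p : A) ∈ Ideal.jacobson (⊥ : Ideal A)) :
    ∀ a ∈ (Ideal.jacobson (⊥ : Ideal A)) ^ 2, D.δ a ∈ Ideal.jacobson (⊥ : Ideal A) := by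
  set J := Ideal.jacobson (⊥ : Ideal A) with hJ
  have key : ∀ a ∈ J ^ 2, a ∈ J ∧ D.δ a ∈ J := by
    intro a ha
    rw [pow_two] at ha
    refine Submodule.mul_induction_on ha ?_ ?_
    · intro x hx y hy
      refine ⟨Ideal.mul_mem_right _ _ hx, ?_⟩
      rw [D.delta_mul]
      refine add_mem (add_mem ?_ ?_) ?_
      · exact Ideal.mul_mem_right _ _
          (Ideal.pow_mem_of_mem _ hx _ (Fact.out : p.Prime).pos)
      · exact Ideal.mul_mem_right _ _
          (Ideal.pow_mem_of_mem _ hy _ (Fact.out : p.Prime).pos)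
      · exact Ideal.mul_mem_right _ _ (Ideal.mul_mem_right _ _ hp)
    · rintro x y ⟨hx, hdx⟩ ⟨hy, hdy⟩
      refine ⟨add_mem hx hy, ?_⟩
      rw [D.delta_add]
      refine sub_mem (add_mem hdx hdy) (Ideal.sum_mem _ ?_)
      intro i hi
      rw [Finset.mem_Ioo] at hi
      exact Ideal.mul_mem_right _ _
        (Ideal.mul_mem_left _ _ (Ideal.pow_mem_of_mem _ hx _ hi.1))
  exact fun a ha => (key a ha).2
end

section
/- Let (A, m) be a local ring with p ∈ m admitting a δ-structure. Then A is unramified, i.e., p ∈ m \ m^2. -/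
open scoped BigOperators

private def deltaF (p : ℕ) : ℕ → ℤ
  | 0 => 0
  | n+1 => deltaF p n - ∑ i ∈ Finset.Ioo 0 p, ((p.choose i / p : ℕ) : ℤ) * (n : ℤ) ^ i

private lemma range_eq (p : ℕ) (hp : 0 < p) : Finset.range p = insert 0 (Finset.Ioo 0 p) := by
  ext i; simp [Finset.mem_Ioo, Finset.mem_range]; omega

private lemma mul_deltaF (p : ℕ) [Fact p.Prime] (n : ℕ) :
    (p : ℤ) * deltaF p n = n - (n : ℤ) ^ p := by
  have hp : p.Prime := Fact.out
  induction n with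
  | zero => simp [deltaF, zero_pow hp.pos.ne']
  | succ n ih =>
    rw [deltaF, mul_sub, ih, Finset.mul_sum]
    have hch : ∀ i ∈ Finset.Ioo 0 p,
        (p : ℤ) * (((p.choose i / p : ℕ) : ℤ) * (n : ℤ) ^ i)
          = (p.choose i : ℤ) * (n : ℤ) ^ i := by
      intro i hi
      simp only [Finset.mem_Ioo] at hi
      have hd : p ∣ p.choose i := hp.dvd_choose_self hi.1.ne' hi.2
      rw [← mul_assoc]
      congr 1
      rw [← Nat.cast_mul, Nat.mul_div_cancel' hd]
    rw [Finset.sum_congr rfl hch]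
    have hbin : ((n : ℤ) + 1) ^ p
        = ∑ k ∈ Finset.range (p + 1), (n : ℤ) ^ k * (p.choose k : ℤ) := by
      simpa using add_pow (n : ℤ) 1 p
    have hsplit : ∑ k ∈ Finset.range (p + 1), (n : ℤ) ^ k * (p.choose k : ℤ)
        = (n : ℤ) ^ p + 1 + ∑ i ∈ Finset.Ioo 0 p, (p.choose i : ℤ) * (n : ℤ) ^ i := by
      rw [Finset.sum_range_succ, range_eq p hp.pos, Finset.sum_insert (by simp)]
      simp [mul_comm]
      ring
    push_cast
    rw [hbin, hsplit]
    ring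

private lemma deltaF_prime (p : ℕ) [Fact p.Prime] : deltaF p p = 1 - (p : ℤ) ^ (p - 1) := by
  have hp : p.Prime := Fact.out
  have h := mul_deltaF p p
  have h2 : (p : ℤ) * deltaF p p = (p : ℤ) * (1 - (p : ℤ) ^ (p - 1)) := by
    have hpp : p - 1 + 1 = p := Nat.succ_pred_eq_of_pos hp.pos
    rw [h, mul_sub, mul_one, ← pow_succ', hpp]
  exact mul_left_cancel₀ (by exact_mod_cast hp.pos.ne') h2

private lemma delta_natCast {A : Type} [CommRing A] {p : ℕ} (D : DeltaStructure A p) (n : ℕ) :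
    D.δ (n : A) = ((deltaF p n : ℤ) : A) := by
  induction n with
  | zero => simpa [deltaF] using D.delta_zero
  | succ n ih =>
    have h1 : ((n + 1 : ℕ) : A) = (n : A) + 1 := by push_cast; ring
    rw [h1, D.delta_add, D.delta_one, ih, deltaF]
    simp only [Int.cast_sub, Int.cast_sum, Int.cast_mul, Int.cast_natCast, Int.cast_pow,
      one_pow, mul_one, add_zero]

theorem statement7 (p : ℕ) [Fact (Nat.Prime p)] {A : Type} [CommRing A] [IsLocalRing A]
    (D : DeltaStructure A p)
    (hp : (p : A) ∈ IsLocalRing.maximalIdeal A) :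
    (p : A) ∈ IsLocalRing.maximalIdeal A ∧ (p : A) ∉ (IsLocalRing.maximalIdeal A) ^ 2 := by
  have hprime : p.Prime := Fact.out
  refine ⟨hp, fun hp2 => ?_⟩
  have hunit : IsUnit (D.δ (p : A)) := by
    rw [delta_natCast, deltaF_prime]
    apply D.isUnit_of_not_dvd
    intro hdvd
    have h1 : (p : ℤ) ∣ (p : ℤ) ^ (p - 1) :=
      dvd_pow_self _ (by have := hprime.two_le; omega : p - 1 ≠ 0)
    have hone : (p : ℤ) ∣ 1 := by
      have := dvd_add hdvd h1
      simpa using this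
    have := Int.le_of_dvd one_pos hone
    have h2 := hprime.two_le
    omega
  have key : (p : A) ∈ IsLocalRing.maximalIdeal A ∧
      D.δ (p : A) ∈ IsLocalRing.maximalIdeal A := by
    rw [sq] at hp2
    refine Submodule.mul_induction_on hp2 ?_ ?_
    · intro a ha b hb
      refine ⟨Ideal.mul_mem_right _ _ ha, ?_⟩
      rw [D.delta_mul]
      refine add_mem (add_mem ?_ ?_) ?_
      · exact Ideal.mul_mem_right _ _ (Ideal.pow_mem_of_mem _ ha p hprime.pos)
      · exact Ideal.mul_mem_right _ _ (Ideal.pow_mem_of_mem _ hb p hprime.pos)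
      · exact Ideal.mul_mem_right _ _ (Ideal.mul_mem_right _ _ hp)
    · intro x y hx hy
      refine ⟨add_mem hx.1 hy.1, ?_⟩
      rw [D.delta_add]
      refine sub_mem (add_mem hx.2 hy.2) (Ideal.sum_mem _ ?_)
      intro i hi
      simp only [Finset.mem_Ioo] at hi
      exact Ideal.mul_mem_right _ _
        (Ideal.mul_mem_left _ _ (Ideal.pow_mem_of_mem _ hx.1 i hi.1))
  exact (Ideal.IsMaximal.ne_top inferInstance)
    (Ideal.eq_top_of_isUnit_mem _ key.2 hunit)
end

section
/- Let A be a derived (p,I)-complete δ-ring where I = (d) with d distinguished. If p, d is a regular sequence on A, then p, φ^{i+1}(d) is a regular sequence on A for every i ≥ 0, where φ is the Frobenius lift. -/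
open scoped BigOperators

open scoped Pointwise

private lemma quot_smul_transfer {A : Type} [CommRing A] (p a b : A) (h : p ∣ a - b)
    (hb : IsSMulRegular (QuotSMulTop p A) b) : IsSMulRegular (QuotSMulTop p A) a := by
  have key : ∀ x : QuotSMulTop p A, a • x = b • x := by
    intro x
    obtain ⟨m, rfl⟩ := Submodule.Quotient.mk_surjective _ x
    obtain ⟨c, hc⟩ := h
    have hm : (a - b) • m ∈ (p • ⊤ : Submodule A A) := by
      rw [hc, mul_smul]
      exact Submodule.smul_mem_pointwise_smul _ _ _ Submodule.mem_top
    have h2 : Submodule.Quotient.mk ((a - b) • m) = (0 : QuotSMulTop p A) :=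
      (Submodule.Quotient.mk_eq_zero _).mpr hm
    rw [sub_smul, Submodule.Quotient.mk_sub] at h2
    rw [← Submodule.Quotient.mk_smul, ← Submodule.Quotient.mk_smul]
    exact sub_eq_zero.mp h2
  intro x y hxy
  exact hb (by simpa [key] using hxy)

private lemma phi_iterate_mod_p {A : Type} [CommRing A] {p : ℕ} (D : DeltaStructure A p)
    (d : A) (n : ℕ) : (p : A) ∣ D.phi^[n] d - d ^ (p ^ n) := by
  induction n with
  | zero => simp
  | succ n ih =>
    rw [Function.iterate_succ_apply']
    obtain ⟨c, hc⟩ := ih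
    have h1 : (p : A) ∣ (D.phi^[n] d) ^ p - (d ^ (p ^ n)) ^ p := by
      refine dvd_trans ?_ (sub_dvd_pow_sub_pow _ _ p)
      exact ⟨c, by linear_combination hc⟩
    obtain ⟨e, he⟩ := h1
    refine ⟨e + D.δ (D.phi^[n] d), ?_⟩
    rw [DeltaStructure.phi]
    rw [pow_succ, pow_mul]
    linear_combination he

theorem statement12 (p : ℕ) [Fact (Nat.Prime p)] {A : Type} [CommRing A]
    (D : DeltaStructure A p) (d : A) (hdist : IsUnit (D.δ d))
    (hc1 : DerivedFComplete (p : A) A) (hc2 : DerivedFComplete d A)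
    (hreg : RingTheory.Sequence.IsWeaklyRegular A [(p : A), d]) :
    ∀ i : ℕ, RingTheory.Sequence.IsWeaklyRegular A [(p : A), D.phi^[i + 1] d] := by
  intro i
  rw [RingTheory.Sequence.isWeaklyRegular_cons_iff,
    RingTheory.Sequence.isWeaklyRegular_singleton_iff] at hreg ⊢
  refine ⟨hreg.1, ?_⟩
  exact quot_smul_transfer _ _ _ (phi_iterate_mod_p D d (i + 1)) (hreg.2.pow _)
end

section
/- Let R be a commutative ring with bounded p^∞-torsion (there exists N with R[p^∞] = R[p^N]), and S a p-adically complete R-algebra. If R/p^n R → S/p^n S is faithfully flat for all n ≥ 1, and R is additionally Noetherian and p-Zariskian (p ∈ Jac(R)), then R → S is faithfully flat. -/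
open scoped BigOperators

/-- A ring map is faithfully flat if its target is a faithfully flat module via it. -/
def IsFaithfullyFlatRingHom {R S : Type} [CommRing R] [CommRing S] (f : R →+* S) : Prop :=
  letI := f.toAlgebra
  Module.FaithfullyFlat R S

lemma span_pow_le_comap (p n : ℕ) {R S : Type} [CommRing R] [CommRing S] [Algebra R S] :
    Ideal.span {(p : R) ^ n} ≤ (Ideal.span {(p : S) ^ n}).comap (algebraMap R S) := by
  rw [Ideal.span_le, Set.singleton_subset_iff, SetLike.mem_coe, Ideal.mem_comap,
    map_pow, map_natCast]
  exact Ideal.subset_span rfl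

/-!
Flatness is tested on relations `∑ fᵢ xᵢ = 0` in `S`, with `I = (p)`. Over the Noetherian ring `R`,
Artin–Rees turns flatness of every `R ⧸ Iⁿ → S ⧸ IⁿS` into a uniform approximation property of a
linear system `G` over `R`: a vector over `S` solving `G` modulo `I^(m+c) S` is congruent modulo
`I^m S` to an `S`-combination of solutions over `R`. Let the columns of `B` generate the syzygies
of `f`. The property for `f` puts `x` in the `I`-adic closure of the image of `B` over `S`, and the
property for `B` makes that image closed, by correcting approximate preimages along the kernel in
the complete module `Sⁿ`. So `x = B y` and the relation is trivial. For faithfulness, a maximal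
ideal `m` contains `I ⊆ Jac R`, so `m S ≠ S` can be read off in `S ⧸ IS`, which is faithfully flat
over `R ⧸ I`.
-/

open Matrix

section AdicPi

variable {R M ι : Type*} [CommRing R] [AddCommGroup M] [Module R M] [Finite ι] (I : Ideal R)

theorem Submodule.mem_smul_top_pi_iff {x : ι → M} :
    x ∈ I • (⊤ : Submodule R (ι → M)) ↔ ∀ i, x i ∈ I • (⊤ : Submodule R M) := by
  classical
  have := Fintype.ofFinite ι
  refine ⟨fun hx i => smul_top_le_comap_smul_top I (LinearMap.proj i) hx, fun hx => ?_⟩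
  rw [← Finset.univ_sum_single x]
  exact sum_mem fun i _ => smul_top_le_comap_smul_top I (LinearMap.single R (fun _ => M) i) (hx i)

theorem Ideal.mem_smul_top_pi_iff {x : ι → R} :
    x ∈ I • (⊤ : Submodule R (ι → R)) ↔ ∀ i, x i ∈ I := by
  rw [Submodule.mem_smul_top_pi_iff, Ideal.smul_eq_mul, Ideal.mul_top]

instance IsHausdorff.pi [IsHausdorff I M] : IsHausdorff I (ι → M) where
  haus' x hx := _root_.funext fun i => IsHausdorff.haus ‹_› (x i) fun n => by
    have := hx n
    rw [SModEq.zero, Submodule.mem_smul_top_pi_iff] at this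
    exact SModEq.zero.mpr (this i)

instance IsPrecomplete.pi [IsPrecomplete I M] : IsPrecomplete I (ι → M) where
  prec' f hf := by
    have hcoord (i : ι) : ∃ L : M, ∀ n, f n i ≡ L [SMOD (I ^ n • ⊤ : Submodule R M)] :=
      IsPrecomplete.prec ‹_› fun hmn => by
        have := hf hmn
        rw [SModEq.sub_mem, Submodule.mem_smul_top_pi_iff] at this
        exact SModEq.sub_mem.mpr (this i)
    choose L hL using hcoord
    exact ⟨L, fun n => SModEq.sub_mem.mpr <|
      (Submodule.mem_smul_top_pi_iff _).mpr fun i => SModEq.sub_mem.mp (hL i n)⟩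

end AdicPi

theorem LinearMap.exists_comap_pow_add_smul_top_le_ker_sup {R M N : Type*} [CommRing R]
    [IsNoetherianRing R] [AddCommGroup M] [Module R M] [AddCommGroup N] [Module R N]
    [Module.Finite R N] (I : Ideal R) (f : M →ₗ[R] N) :
    ∃ k, ∀ n, (I ^ (n + k) • ⊤ : Submodule R N).comap f ≤ ker f ⊔ I ^ n • ⊤ := by
  obtain ⟨k, hk⟩ := Ideal.exists_pow_inf_eq_pow_smul I (range f)
  refine ⟨k, fun n x hx => ?_⟩
  have hfx : f x ∈ (I ^ n • ⊤ : Submodule R M).map f := by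
    have hmem : f x ∈ I ^ (n + k) • ⊤ ⊓ range f := ⟨hx, mem_range_self f x⟩
    rw [hk (n + k) (Nat.le_add_left k n), Nat.add_sub_cancel] at hmem
    rw [Submodule.map_smul'', Submodule.map_top]
    exact (smul_mono_right _ inf_le_right : _ ≤ I ^ n • range f) hmem
  obtain ⟨d, hd, hfd⟩ := hfx
  exact Submodule.mem_sup.mpr ⟨x - d, by simp [hfd], d, hd, sub_add_cancel x d⟩

theorem LinearMap.mem_range_of_forall_mem_range_sup_pow_smul_top {S M N : Type*} [CommRing S]
    [AddCommGroup M] [Module S M] [AddCommGroup N] [Module S N] {J : Ideal S}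
    [IsPrecomplete J M] [IsHausdorff J N] (B : M →ₗ[S] N) {c : ℕ}
    (hB : ∀ m, (J ^ (m + c) • ⊤ : Submodule S N).comap B ≤ ker B ⊔ J ^ m • ⊤)
    {x : N} (hx : ∀ m, x ∈ range B ⊔ J ^ m • ⊤) : x ∈ range B := by
  have hpow {m n : ℕ} (h : m ≤ n) : (J ^ n • ⊤ : Submodule S N) ≤ J ^ m • ⊤ :=
    Submodule.smul_mono_left (Ideal.pow_le_pow_right h)
  have happrox (m : ℕ) : ∃ w, x - B w ∈ J ^ (m + c) • (⊤ : Submodule S N) := by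
    obtain ⟨_, ⟨w, rfl⟩, e, he, rfl⟩ := Submodule.mem_sup.mp (hx (m + c))
    exact ⟨w, by rwa [add_sub_cancel_left]⟩
  choose w hw using happrox
  have hcorrect (m : ℕ) : ∃ z ∈ ker B, w (m + 1) - w m - z ∈ J ^ m • (⊤ : Submodule S M) := by
    have hBw : B (w (m + 1) - w m) ∈ J ^ (m + c) • (⊤ : Submodule S N) := by
      have := sub_mem (hw m) (hpow (by omega) (hw (m + 1)))
      rwa [sub_sub_sub_cancel_left, ← map_sub] at this
    obtain ⟨z, hz, e, he, hze⟩ := Submodule.mem_sup.mp (hB m hBw)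
    exact ⟨z, hz, by rwa [← hze, add_sub_cancel_left]⟩
  choose z hz hwz using hcorrect
  -- subtracting the kernel corrections turns `w` into a Cauchy sequence with the same image
  set v : ℕ → M := fun m => w m - ∑ k ∈ Finset.range m, z k
  have hBv (m : ℕ) : B (v m) = B (w m) := by
    simp [v, map_sum, mem_ker.mp (hz _)]
  have hcauchy (m : ℕ) : v m ≡ v (m + 1) [SMOD (J ^ m • ⊤ : Submodule S M)] := by
    rw [SModEq.sub_mem]
    convert neg_mem (hwz m) using 1
    simp only [v, Finset.sum_range_succ]
    abel
  obtain ⟨Y, hY⟩ := IsPrecomplete.prec ‹_› ((AdicCompletion.isAdicCauchy_iff J M v).mpr hcauchy)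
  refine ⟨Y, sub_eq_zero.mp <| IsHausdorff.haus ‹_› _ fun n => SModEq.zero.mpr ?_⟩
  have hYv : B (Y - v n) ∈ J ^ n • (⊤ : Submodule S N) :=
    Submodule.smul_top_le_comap_smul_top _ B (SModEq.sub_mem.mp (hY n).symm)
  convert sub_mem hYv (hpow (Nat.le_add_right n c) (hw n)) using 1
  rw [map_sub, hBv]
  abel

theorem Module.Flat.exists_eq_sum_smul_of_forall_sum_smul_eq_zero {A M ι κ : Type*} [CommRing A]
    [AddCommGroup M] [Module A M] [Module.Flat A M] [Fintype ι] [Fintype κ]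
    (G : Matrix ι κ A) {x : κ → M} (hx : ∀ i, ∑ j, G i j • x j = 0) :
    ∃ (n : ℕ) (a : Fin n → κ → A) (y : Fin n → M),
      (∀ t, G *ᵥ a t = 0) ∧ ∀ j, x j = ∑ t, a t j • y t := by
  classical
  have hcomp : Fintype.linearCombination A x ∘ₗ Gᵀ.mulVecLin = 0 := by
    refine LinearMap.pi_ext' fun i => LinearMap.ext_ring ?_
    simp [Fintype.linearCombination_apply, hx i]
  obtain ⟨n, a, y, hxy, ha⟩ := Module.Flat.exists_factorization_of_comp_eq_zero_of_free hcomp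
  refine ⟨n, fun t j => a (Pi.single j 1) t, fun t => y (Finsupp.single t 1), fun t => ?_,
    fun j => ?_⟩
  · ext i
    have hrow : a (Gᵀ *ᵥ Pi.single i 1) t = 0 := by
      simpa using congr($ha (Pi.single i 1) t)
    rw [Pi.zero_apply, ← hrow, Matrix.mulVec_single_one, LinearMap.pi_apply_eq_sum_univ a,
      Finsupp.finsetSum_apply]
    refine Finset.sum_congr rfl fun j _ => ?_
    have hsingle : (fun k => if j = k then (1 : A) else 0) = Pi.single j 1 := by
      funext k
      simp [Pi.single_apply, eq_comm]
    simp [hsingle]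
  · have hxj : x j = y (a (Pi.single j 1)) := by
      simpa [Fintype.linearCombination_apply] using congr($hxy (Pi.single j 1))
    rw [hxj, ← Finsupp.univ_sum_single (a (Pi.single j 1)), map_sum]
    simp_rw [← Finsupp.smul_single_one _ (a _ _), map_smul]

section Extension

variable {R S ι κ : Type*} [CommRing R] [CommRing S] [Algebra R S] [Fintype κ]

variable (S) in
def Matrix.extendedKer (G : Matrix ι κ R) : Submodule S (κ → S) :=
  Submodule.span S ((algebraMap R S ∘ ·) '' LinearMap.ker G.mulVecLin)

theorem Matrix.map_mulVec_algebraMap_comp (G : Matrix ι κ R) (a : κ → R) :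
    G.map (algebraMap R S) *ᵥ (algebraMap R S ∘ a) = algebraMap R S ∘ (G *ᵥ a) :=
  funext fun i => ((algebraMap R S).map_mulVec G a i).symm

theorem Matrix.extendedKer_le_ker (G : Matrix ι κ R) :
    G.extendedKer S ≤ LinearMap.ker (G.map (algebraMap R S)).mulVecLin := by
  refine Submodule.span_le.mpr ?_
  rintro _ ⟨a, ha, rfl⟩
  simp_all [Matrix.map_mulVec_algebraMap_comp]

theorem Matrix.extendedKer_le_range {n : ℕ} {G : Matrix ι κ R} {B : Matrix κ (Fin n) R}
    (h : LinearMap.ker G.mulVecLin ≤ LinearMap.range B.mulVecLin) :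
    G.extendedKer S ≤ LinearMap.range (B.map (algebraMap R S)).mulVecLin := by
  refine Submodule.span_le.mpr ?_
  rintro _ ⟨a, ha, rfl⟩
  obtain ⟨b, rfl⟩ := h ha
  exact ⟨algebraMap R S ∘ b, by simp [Matrix.map_mulVec_algebraMap_comp]⟩

theorem Matrix.mem_span_sup_of_map_mulVec_mem [Fintype ι] {K : Ideal R}
    [Module.Flat (R ⧸ K) (S ⧸ K.map (algebraMap R S))] (G : Matrix ι κ R) {x : κ → S}
    (hx : G.map (algebraMap R S) *ᵥ x ∈ K.map (algebraMap R S) • (⊤ : Submodule S (ι → S))) :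
    x ∈ Submodule.span S ((algebraMap R S ∘ ·) '' {a | G *ᵥ a ∈ K • (⊤ : Submodule R (ι → R))}) ⊔
      K.map (algebraMap R S) • ⊤ := by
  have hred (i : ι) : ∑ j, G.map (Ideal.Quotient.mk K) i j •
      Ideal.Quotient.mk (K.map (algebraMap R S)) (x j) = 0 := by
    simp_rw [Matrix.map_apply, Ideal.Quotient.mk_smul_mk_quotient_map_quotient, ← map_sum,
      Ideal.Quotient.eq_zero_iff_mem]
    exact (Ideal.mem_smul_top_pi_iff _).mp hx i
  have hlift := Module.Flat.exists_eq_sum_smul_of_forall_sum_smul_eq_zero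
    (A := R ⧸ K) (M := S ⧸ K.map (algebraMap R S)) _ hred
  obtain ⟨n, a, y, ha, hxy⟩ := hlift
  choose a' ha' using fun t j => Ideal.Quotient.mk_surjective (a t j)
  choose y' hy' using fun t => Ideal.Quotient.mk_surjective (y t)
  have hsol (t : Fin n) : G *ᵥ a' t ∈ K • (⊤ : Submodule R (ι → R)) := by
    refine (Ideal.mem_smul_top_pi_iff K).mpr fun i => Ideal.Quotient.eq_zero_iff_mem.mp ?_
    have hat : Ideal.Quotient.mk K ∘ a' t = a t := funext (ha' t)
    rw [(Ideal.Quotient.mk K).map_mulVec, hat, ha t, Pi.zero_apply]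
  rw [← sub_add_cancel x (∑ t, y' t • (algebraMap R S ∘ a' t)), add_comm]
  refine Submodule.add_mem_sup
    (sum_mem fun t _ => Submodule.smul_mem _ _ (Submodule.subset_span ⟨a' t, hsol t, rfl⟩))
    ((Ideal.mem_smul_top_pi_iff _).mpr fun j => Ideal.Quotient.eq_zero_iff_mem.mp ?_)
  rw [Pi.sub_apply, map_sub, sub_eq_zero, hxy j, Finset.sum_apply, map_sum]
  refine Finset.sum_congr rfl fun t _ => ?_
  rw [← ha', ← hy', Ideal.Quotient.mk_smul_mk_quotient_map_quotient, mul_comm]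
  rfl

end Extension

theorem Matrix.exists_comap_pow_add_smul_top_le_extendedKer_sup {R S ι κ : Type*} [CommRing R]
    [CommRing S] [Algebra R S] [IsNoetherianRing R] [Fintype ι] [Fintype κ] {I : Ideal R}
    (hflat : ∀ n, 0 < n → Module.Flat (R ⧸ I ^ n) (S ⧸ (I ^ n).map (algebraMap R S)))
    (G : Matrix ι κ R) :
    ∃ c, ∀ m, ((I.map (algebraMap R S)) ^ (m + c) • ⊤ : Submodule S (ι → S)).comap
      (G.map (algebraMap R S)).mulVecLin ≤ G.extendedKer S ⊔ (I.map (algebraMap R S)) ^ m • ⊤ := by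
  obtain ⟨k, hk⟩ := G.mulVecLin.exists_comap_pow_add_smul_top_le_ker_sup I
  refine ⟨k + 1, fun m x hx => ?_⟩
  have := hflat (m + (k + 1)) (by omega)
  rw [Submodule.mem_comap, Matrix.mulVecLin_apply, ← Ideal.map_pow] at hx
  refine (sup_le ?_ (le_sup_of_le_right (Submodule.smul_mono_left ?_)) : _ ≤ G.extendedKer S ⊔ _)
    (G.mem_span_sup_of_map_mulVec_mem hx)
  · refine Submodule.span_le.mpr ?_
    rintro _ ⟨a, ha, rfl⟩
    have hGa : a ∈ (I ^ (m + k) • ⊤ : Submodule R (ι → R)).comap G.mulVecLin :=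
      Submodule.smul_mono_left (Ideal.pow_le_pow_right (by omega)) ha
    obtain ⟨z, hz, d, hd, rfl⟩ := Submodule.mem_sup.mp (hk m hGa)
    have hcomp : algebraMap R S ∘ (z + d) = algebraMap R S ∘ z + algebraMap R S ∘ d :=
      funext fun j => map_add _ (z j) (d j)
    simp only [SetLike.mem_coe]
    rw [hcomp]
    refine Submodule.add_mem_sup (Submodule.subset_span ⟨z, hz, rfl⟩)
      ((Ideal.mem_smul_top_pi_iff _).mpr fun j => ?_)
    rw [← Ideal.map_pow]
    exact Ideal.mem_map_of_mem _ ((Ideal.mem_smul_top_pi_iff _).mp hd j)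
  · rw [← Ideal.map_pow]
    exact Ideal.map_mono (Ideal.pow_le_pow_right (by omega))

theorem Module.Flat.of_isAdicComplete_of_flat_quotient {R S : Type*} [CommRing R] [CommRing S]
    [Algebra R S] [IsNoetherianRing R] (I : Ideal R) [IsAdicComplete (I.map (algebraMap R S)) S]
    (hflat : ∀ n, 0 < n → Module.Flat (R ⧸ I ^ n) (S ⧸ (I ^ n).map (algebraMap R S))) :
    Module.Flat R S := by
  refine Module.Flat.iff_forall_isTrivialRelation.mpr fun {l f x} hfx => ?_
  let F : Matrix Unit (Fin l) R := Matrix.of fun _ => f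
  obtain ⟨n, s, hs⟩ := Submodule.fg_iff_exists_fin_generating_family.mp
    (IsNoetherian.noetherian (LinearMap.ker F.mulVecLin))
  let B : Matrix (Fin l) (Fin n) R := Matrix.of fun i t => s t i
  have hBF : LinearMap.range B.mulVecLin = LinearMap.ker F.mulVecLin := by
    rw [Matrix.range_mulVecLin, ← hs]
    rfl
  obtain ⟨c₁, hF⟩ := F.exists_comap_pow_add_smul_top_le_extendedKer_sup hflat
  obtain ⟨c₂, hB⟩ := B.exists_comap_pow_add_smul_top_le_extendedKer_sup hflat
  have hFx : F.map (algebraMap R S) *ᵥ x = 0 := by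
    ext
    simpa [Matrix.mulVec, dotProduct, F, Algebra.smul_def] using hfx
  obtain ⟨Y, hY⟩ : x ∈ LinearMap.range (B.map (algebraMap R S)).mulVecLin := by
    refine LinearMap.mem_range_of_forall_mem_range_sup_pow_smul_top _
      (fun m => (hB m).trans (sup_le_sup_right B.extendedKer_le_ker _)) fun m => ?_
    refine sup_le_sup_right (F.extendedKer_le_range (S := S) hBF.ge) _ (hF m ?_)
    simp [hFx]
  refine ⟨n, B, Y, fun i => ?_, fun t => ?_⟩
  · simp [← hY, Matrix.mulVec, dotProduct, B, Algebra.smul_def]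
  · have hst : s t ∈ LinearMap.ker F.mulVecLin := hs ▸ Submodule.subset_span ⟨t, rfl⟩
    simpa [Matrix.mulVec, dotProduct, F, B] using congr_fun hst ()

theorem Module.FaithfullyFlat.of_faithfullyFlat_quotient_of_le_jacobson {R S : Type*} [CommRing R]
    [CommRing S] [Algebra R S] [Module.Flat R S] {I : Ideal R} (hI : I ≤ Ideal.jacobson ⊥)
    [Module.FaithfullyFlat (R ⧸ I) (S ⧸ I.map (algebraMap R S))] : Module.FaithfullyFlat R S := by
  refine ⟨fun m hm hmS => ?_⟩
  have hIm : I ≤ m := hI.trans (sInf_le ⟨bot_le, hm⟩)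
  rw [Ideal.smul_top_eq_map, Submodule.restrictScalars_eq_top_iff] at hmS
  have hmax : (m.map (Ideal.Quotient.mk I)).IsMaximal :=
    Ideal.IsMaximal.map_of_surjective_of_ker_le Ideal.Quotient.mk_surjective
      (by rwa [Ideal.mk_ker])
  have hsquare : (algebraMap (R ⧸ I) (S ⧸ I.map (algebraMap R S))).comp (Ideal.Quotient.mk I)
      = (Ideal.Quotient.mk (I.map (algebraMap R S))).comp (algebraMap R S) := rfl
  have hmapS : (m.map (Ideal.Quotient.mk I)).map (algebraMap (R ⧸ I) (S ⧸ I.map (algebraMap R S)))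
      = ⊤ := by
    rw [Ideal.map_map, hsquare, ← Ideal.map_map, hmS, Ideal.map_top]
  apply hmax.ne_top
  rw [← Ideal.comap_map_eq_self_of_faithfullyFlat (B := S ⧸ I.map (algebraMap R S))
    (m.map (Ideal.Quotient.mk I)), hmapS, Ideal.comap_top]

theorem IsFaithfullyFlatRingHom.faithfullyFlat_quotient {R S : Type} [CommRing R] [CommRing S]
    [Algebra R S] {K K' : Ideal R} {J : Ideal S} {h : K' ≤ J.comap (algebraMap R S)}
    (hf : IsFaithfullyFlatRingHom (Ideal.quotientMap J (algebraMap R S) h)) (hK : K' = K)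
    (hJ : J = K.map (algebraMap R S)) :
    Module.FaithfullyFlat (R ⧸ K) (S ⧸ K.map (algebraMap R S)) := by
  subst hK hJ
  exact RingHom.faithfullyFlat_algebraMap_iff.mp hf

theorem statement13_general (p : ℕ) {R S : Type} [CommRing R] [CommRing S]
    [Algebra R S] [IsNoetherianRing R]
    (hzar : (p : R) ∈ Ideal.jacobson (⊥ : Ideal R))
    (hcompl : IsAdicComplete (Ideal.span {(p : S)}) S)
    (hff : ∀ n : ℕ, 1 ≤ n → IsFaithfullyFlatRingHom
      (Ideal.quotientMap (Ideal.span {(p : S) ^ n}) (algebraMap R S) (span_pow_le_comap p n))) :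
    Module.FaithfullyFlat R S := by
  set I := Ideal.span {(p : R)}
  have hIS : I.map (algebraMap R S) = Ideal.span {(p : S)} := by
    simp [I, Ideal.map_span]
  have hquot (n : ℕ) (hn : 0 < n) :
      Module.FaithfullyFlat (R ⧸ I ^ n) (S ⧸ (I ^ n).map (algebraMap R S)) :=
    (hff n hn).faithfullyFlat_quotient (Ideal.span_singleton_pow _ n).symm
      (by rw [Ideal.map_pow, hIS, Ideal.span_singleton_pow])
  have : IsAdicComplete (I.map (algebraMap R S)) S := hIS ▸ hcompl
  have : Module.Flat R S :=
    .of_isAdicComplete_of_flat_quotient I fun n hn => (hquot n hn).toFlat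
  have : Module.FaithfullyFlat (R ⧸ I) (S ⧸ I.map (algebraMap R S)) :=
    (hff 1 le_rfl).faithfullyFlat_quotient (by rw [pow_one]) (by rw [pow_one, hIS])
  exact .of_faithfullyFlat_quotient_of_le_jacobson ((Ideal.span_singleton_le_iff_mem _).mpr hzar)

theorem statement13 (p : ℕ) [Fact (Nat.Prime p)] {R S : Type} [CommRing R] [CommRing S]
    [Algebra R S] [IsNoetherianRing R]
    (hbd : ∃ N : ℕ, ∀ a : R, (∃ n : ℕ, (p : R) ^ n * a = 0) → (p : R) ^ N * a = 0)
    (hzar : (p : R) ∈ Ideal.jacobson (⊥ : Ideal R))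
    (hcompl : IsAdicComplete (Ideal.span {(p : S)}) S)
    (hff : ∀ n : ℕ, 1 ≤ n → IsFaithfullyFlatRingHom
      (Ideal.quotientMap (Ideal.span {(p : S) ^ n}) (algebraMap R S) (span_pow_le_comap p n))) :
    Module.FaithfullyFlat R S :=
  statement13_general p hzar hcompl hff
end
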